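/- There exists an extended open graph with a gflow that admits no Z-NF gflow: the path 1–2–3 with I = {1}, O = {3}, λ(1) = λ(2) = {X,Y} has a gflow but no gflow g satisfying g(u) ⊆ {u} ∪ O for all u ∈ {1,2}. -/

import Mathlib

open scoped symmDiff

inductive Pauli | X | Y | Z
deriving DecidableEq

inductive MPlane | XY | XZ | YZ
deriving DecidableEq

/-- The set of Pauli operators defining a measurement plane. -/
def MPlane.paulis : MPlane → Finset Pauli
  | .XY => {.X, .Y}
  | .XZ => {.X, .Z}
  | .YZ => {.Y, .Z}

variable {V : Type} [Fintype V] [DecidableEq V]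

/-- Odd neighbourhood: vertices with an odd number of neighbours in `A`. -/
def oddNbhd (G : SimpleGraph V) [DecidableRel G.Adj] (A : Finset V) : Finset V :=
  Finset.univ.filter fun w => Odd (A.filter (G.Adj w)).card

/-- `f` is extensive w.r.t. the strict order `r`. -/
def IsExtensive (O : Finset V) (r : V → V → Prop) (f : V → Finset V) : Prop :=
  ∀ u ∉ O, ∀ v ∈ f u, v ≠ u → r u v

/-- gflow of an extended open graph `(G, I, O, lam)`. -/
def IsGflow (G : SimpleGraph V) [DecidableRel G.Adj]
    (I O : Finset V) (lam : V → MPlane) (g : V → Finset V) : Prop :=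
  (∀ u ∉ O, g u ⊆ Iᶜ) ∧
  (∃ r : V → V → Prop, IsStrictOrder V r ∧
    IsExtensive O r (fun u => g u ∪ oddNbhd G (g u))) ∧
  ∀ u ∉ O,
    (lam u = .XY → u ∈ oddNbhd G (g u) ∧ u ∉ g u) ∧
    (lam u = .XZ → u ∈ g u ∧ u ∈ oddNbhd G (g u)) ∧
    (lam u = .YZ → u ∈ g u ∧ u ∉ oddNbhd G (g u))

/-- σ-normal forms for gflows. -/
def IsNF (σ : Pauli) (G : SimpleGraph V) [DecidableRel G.Adj]
    (O : Finset V) (g : V → Finset V) : Prop :=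
  match σ with
  | .X => ∀ u ∉ O, oddNbhd G (g u) ⊆ insert u O
  | .Y => ∀ u ∉ O, (g u ∆ oddNbhd G (g u)) ⊆ insert u O
  | .Z => ∀ u ∉ O, g u ⊆ insert u O
/-- The path graph 1–2–3 (as vertices 0,1,2 of `Fin 3`). -/
def pathG : SimpleGraph (Fin 3) where
  Adj a b := (a = 0 ∧ b = 1) ∨ (a = 1 ∧ b = 0) ∨ (a = 1 ∧ b = 2) ∨ (a = 2 ∧ b = 1)
  symm := ⟨by intro a b h; fin_cases a <;> fin_cases b <;> simp_all⟩
  loopless := ⟨by intro a; fin_cases a <;> simp⟩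

instance : DecidableRel pathG.Adj := fun a b =>
  decidable_of_iff ((a = 0 ∧ b = 1) ∨ (a = 1 ∧ b = 0) ∨ (a = 1 ∧ b = 2) ∨ (a = 2 ∧ b = 1)) Iff.rfl

/-!
Setting `g(1) = {2}`, `g(2) = {3}` gives a gflow for the order `1 < 2 < 3`. On the other hand,
an `XY`-measured vertex `u` lies in `Odd(g(u))`, so `g(u)` contains a neighbour of `u`; in a
Z-NF gflow that neighbour must be an output. Vertex 1 has no output neighbour.
-/

theorem exists_adj_of_mem_oddNbhd {W : Type} [Fintype W] {G : SimpleGraph W}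
    [DecidableRel G.Adj] {A : Finset W} {w : W} (hw : w ∈ oddNbhd G A) : ∃ v ∈ A, G.Adj w v := by
  simp only [oddNbhd, Finset.mem_filter, Finset.mem_univ, true_and] at hw
  obtain ⟨v, hv⟩ := Finset.card_pos.mp hw.pos
  exact ⟨v, Finset.mem_filter.mp hv⟩

theorem IsGflow.exists_adj_mem_of_isNF_Z {G : SimpleGraph V} [DecidableRel G.Adj]
    {I O : Finset V} {lam : V → MPlane} {g : V → Finset V} (hg : IsGflow G I O lam g)
    (hnf : IsNF .Z G O g) {u : V} (hu : u ∉ O) (hXY : lam u = .XY) : ∃ v ∈ O, G.Adj u v := by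
  obtain ⟨v, hv, hadj⟩ := exists_adj_of_mem_oddNbhd ((hg.2.2 u hu).1 hXY).1
  have hvO : v ∈ insert u O := hnf u hu hv
  exact ⟨v, (Finset.mem_insert.mp hvO).resolve_left hadj.ne', hadj⟩

def pathGflow : Fin 3 → Finset (Fin 3) := ![{1}, {2}, ∅]

theorem isGflow_pathGflow : IsGflow pathG {0} {2} (fun _ => .XY) pathGflow := by
  refine ⟨by decide, ⟨(· < ·), inferInstance, ?_⟩, by decide⟩
  unfold IsExtensive
  decide

/-- The path 1–2–3 with I = {1}, O = {3} and {X,Y}-measurements has a gflow but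
no Z-NF gflow. -/
theorem exists_gflow_no_ZNF :
    (∃ g : Fin 3 → Finset (Fin 3), IsGflow pathG {0} {2} (fun _ => .XY) g) ∧
    ¬ ∃ g : Fin 3 → Finset (Fin 3),
        IsGflow pathG {0} {2} (fun _ => .XY) g ∧ IsNF .Z pathG {2} g := by
  refine ⟨⟨pathGflow, isGflow_pathGflow⟩, ?_⟩
  rintro ⟨g, hg, hnf⟩
  obtain ⟨v, hv, hadj⟩ := hg.exists_adj_mem_of_isNF_Z hnf (u := 0) (by decide) rfl
  rw [Finset.mem_singleton.mp hv] at hadj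
  exact absurd hadj (by decide)
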